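/- For 0 < p < 1, the row-stochastic matrix P_p = [[p, 1−p, 0],[p, 0, 1−p],[0, p, 1−p]] has stationary distribution u = (p², p(1−p), (1−p)²)/(p² − p + 1), i.e., u P_p = u and the entries of u sum to 1. -/

import Mathlib

/-!
The unnormalised vector `w = (p², p(1-p), (1-p)²)` is a left fixed vector of `P_p` over any
commutative ring, by a direct computation of `w P_p`; its mass is `p² - p + 1 = (p - 1/2)² + 3/4`,
which never vanishes over `ℝ`, so `w` can be normalised.
-/

section StationaryWeight

variable {R : Type*} [CommRing R] (p : R)

def goldenChain : Matrix (Fin 3) (Fin 3) R :=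
  !![p, 1 - p, 0; p, 0, 1 - p; 0, p, 1 - p]

def goldenWeight : Fin 3 → R :=
  ![p ^ 2, p * (1 - p), (1 - p) ^ 2]

theorem vecMul_goldenWeight_goldenChain :
    Matrix.vecMul (goldenWeight p) (goldenChain p) = goldenWeight p := by
  ext i
  fin_cases i <;>
    simp [goldenWeight, goldenChain, Matrix.vecMul, dotProduct, Fin.sum_univ_succ] <;> ring

theorem sum_goldenWeight : ∑ i, goldenWeight p i = p ^ 2 - p + 1 := by
  simp only [goldenWeight, Fin.sum_univ_three, Matrix.cons_val]
  ring

end StationaryWeight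

theorem sq_sub_self_add_one_pos (p : ℝ) : 0 < p ^ 2 - p + 1 := by
  nlinarith [sq_nonneg (p - 1 / 2)]

theorem asymmetric_markov_stationary_general (p : ℝ) :
    let P : Matrix (Fin 3) (Fin 3) ℝ := !![p, 1 - p, 0; p, 0, 1 - p; 0, p, 1 - p]
    let u : Fin 3 → ℝ :=
      ![p ^ 2 / (p ^ 2 - p + 1), p * (1 - p) / (p ^ 2 - p + 1),
        (1 - p) ^ 2 / (p ^ 2 - p + 1)]
    Matrix.vecMul u P = u ∧ ∑ i, u i = 1 := by
  intro P u
  have hu : u = (p ^ 2 - p + 1)⁻¹ • goldenWeight p := by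
    ext i
    fin_cases i <;> simp [u, goldenWeight, div_eq_inv_mul]
  refine ⟨?_, ?_⟩
  · rw [hu, Matrix.smul_vecMul]
    exact congrArg _ (vecMul_goldenWeight_goldenChain p)
  · rw [hu]
    simp only [Pi.smul_apply, smul_eq_mul, ← Finset.mul_sum, sum_goldenWeight]
    exact inv_mul_cancel₀ (sq_sub_self_add_one_pos p).ne'

theorem asymmetric_markov_stationary (p : ℝ) (hp : 0 < p) (hp1 : p < 1) :
    let P : Matrix (Fin 3) (Fin 3) ℝ := !![p, 1 - p, 0; p, 0, 1 - p; 0, p, 1 - p]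
    let u : Fin 3 → ℝ :=
      ![p ^ 2 / (p ^ 2 - p + 1), p * (1 - p) / (p ^ 2 - p + 1),
        (1 - p) ^ 2 / (p ^ 2 - p + 1)]
    Matrix.vecMul u P = u ∧ ∑ i, u i = 1 :=
  asymmetric_markov_stationary_general p
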